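/- Let γ and γ' be scalar systems of SL_n-type. If γ({i},{j};λ) = γ'({i},{j};λ) for all pairs of distinct elements i, j ∈ {1,…,n} and all λ ∈ ℤ^n, then γ(S,T;λ) = γ'(S,T;λ) for all disjoint subsets S, T ⊆ {1,…,n} and all λ ∈ ℤ^n. -/

import Mathlib

/-!
Induct on `|S| + |T|`, comparing the two systems through the ratio `γ / γ'`: relations (i), (iii)
and (iv) are multiplicative, so the ratio satisfies them too, and it is `1` on smaller pairs.
Relation (iv) reduces everything to pairs `(A, {j})`. For `A = S ∪ {i}` with `|A| ≥ 2`, the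
multiplicative relations show that `t = γ(A,{j};·) / γ'(A,{j};·)` satisfies `t(λ) t(λ + e_S) = 1`,
that shifting `λ` by `e_x` for `x ∈ A` acts on `t` like shifting by `e_j`, and that `t` is
`2 e_j`-periodic. Relation (ii) then pins `t` to `1`, because `[2]_q ≠ 0` when `q⁴ ≠ 1`.
-/

open Finset

/-- The indicator vector `e_S ∈ ℤ^n` of a subset `S ⊆ {1,…,n}`. -/
def eVec (n : ℕ) (S : Finset (Fin n)) : Fin n → ℤ := fun i => if i ∈ S then 1 else 0

/-- A scalar system of `T\SL_n`-type: a family of scalars `γ(S,T;λ) ∈ k`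
indexed by pairs of disjoint subsets `S, T ⊆ {1,…,n}` and `λ ∈ ℤ^n`,
invariant under `λ ↦ λ + (1,…,1)` and normalized on empty sets,
satisfying the relations (i)–(vi) of Definition 5.4 of the paper. -/
structure ScalarSystem (n : ℕ) (k : Type*) [Field k] (q : k) where
  γ : Finset (Fin n) → Finset (Fin n) → (Fin n → ℤ) → k
  periodic : ∀ (S T : Finset (Fin n)) (lam : Fin n → ℤ),
    γ S T (lam + eVec n Finset.univ) = γ S T lam
  empty_left : ∀ (T : Finset (Fin n)) (lam : Fin n → ℤ), γ ∅ T lam = 1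
  empty_right : ∀ (S : Finset (Fin n)) (lam : Fin n → ℤ), γ S ∅ lam = 1
  rel1 : ∀ (S T : Finset (Fin n)) (lam : Fin n → ℤ), Disjoint S T →
    γ S T lam * γ T S (lam - eVec n S) = 1
  rel2 : ∀ (S : Finset (Fin n)) (i j : Fin n) (lam : Fin n → ℤ),
    i ≠ j → i ∉ S → j ∉ S →
    γ (insert i S) {j} lam * γ {j} S (lam - eVec n S)
      + γ (insert j S) {i} lam * γ {i} S (lam - eVec n S) = q + q⁻¹
  rel3 : ∀ (S : Finset (Fin n)) (i j : Fin n) (lam : Fin n → ℤ),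
    i ≠ j → i ∉ S → j ∉ S →
    γ S {i} lam * γ {i} (insert j S) (lam - eVec n (insert j S))
      = γ (insert i S) {j} (lam - eVec n {j}) * γ {j} S (lam - eVec n (insert j S))
  rel4 : ∀ (S T U : Finset (Fin n)) (lam : Fin n → ℤ),
    Disjoint S T → Disjoint S U → Disjoint T U →
    γ S T (lam + eVec n U) * γ (S ∪ T) U lam = γ S (T ∪ U) lam * γ T U lam
  rel5 : ∀ (i j : Fin n) (lam : Fin n → ℤ), i ≠ j →
    γ {i} {j} lam + γ {j} {i} lam = q + q⁻¹
  rel6 : ∀ (i j l : Fin n) (lam : Fin n → ℤ), i ≠ j → j ≠ l → i ≠ l →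
    γ {i} {j, l} lam + γ {j} {l, i} lam + γ {l} {i, j} lam
      = q * q + 1 + q⁻¹ * q⁻¹

variable {n : ℕ}

lemma eVec_empty : eVec n ∅ = 0 := by
  funext x
  simp [eVec]

lemma eVec_union {S T : Finset (Fin n)} (h : Disjoint S T) :
    eVec n (S ∪ T) = eVec n S + eVec n T := by
  funext x
  by_cases hx : x ∈ S
  · simp [eVec, hx, disjoint_left.mp h hx]
  · simp [eVec, hx]

lemma eVec_insert {S : Finset (Fin n)} {i : Fin n} (h : i ∉ S) :
    eVec n (insert i S) = eVec n {i} + eVec n S := by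
  rw [insert_eq, eVec_union (disjoint_singleton_left.mpr h)]

lemma apply_add_eVec_eq_of_forall_mem {α : Type*} {f : (Fin n → ℤ) → α}
    {F : Finset (Fin n)} {v : Fin n → ℤ}
    (hf : ∀ x ∈ F, ∀ μ, f (μ + eVec n {x}) = f (μ + v)) (μ : Fin n → ℤ) :
    f (μ + eVec n F) = f (μ + F.card • v) := by
  induction F using Finset.induction_on generalizing μ with
  | empty => simp [eVec_empty]
  | insert x F hxF ih =>
    rw [eVec_insert hxF, card_insert_of_notMem hxF, ← add_assoc,
      ih (fun y hy => hf y (mem_insert_of_mem hy)), add_right_comm,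
      hf x (mem_insert_self x F), succ_nsmul, add_assoc]

/-- Both sides equal `(f ν)⁻¹` for `ν = μ - e_{B \ {x, y}}`. -/
lemma apply_add_eVec_singleton_eq {M : Type*} [DivisionMonoid M] {f : (Fin n → ℤ) → M}
    {B : Finset (Fin n)} (hf : ∀ b ∈ B, ∀ μ, f μ * f (μ + eVec n (B.erase b)) = 1)
    {x y : Fin n} (hx : x ∈ B) (hy : y ∈ B) (μ : Fin n → ℤ) :
    f (μ + eVec n {x}) = f (μ + eVec n {y}) := by
  obtain rfl | hxy := eq_or_ne x y
  · rfl
  set R := (B.erase x).erase y with hR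
  have hBx : B.erase x = insert y R := (insert_erase (mem_erase.mpr ⟨hxy.symm, hy⟩)).symm
  have hBy : B.erase y = insert x R := by
    rw [hR, erase_right_comm, insert_erase (mem_erase.mpr ⟨hxy, hx⟩)]
  have hyR : y ∉ R := notMem_erase y _
  have hxR : x ∉ R := fun h => notMem_erase x B (mem_of_mem_erase h)
  have key := (eq_inv_of_mul_eq_one_right (hf x hx (μ - eVec n R))).trans
    (eq_inv_of_mul_eq_one_right (hf y hy (μ - eVec n R))).symm
  rw [hBx, hBy, eVec_insert hyR, eVec_insert hxR] at key
  convert key.symm using 2 <;> abel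

lemma add_inv_ne_zero_of_pow_four_ne_one {K : Type*} [Field K] {q : K} (hq : q ≠ 0)
    (h4 : q ^ 4 ≠ 1) : q + q⁻¹ ≠ 0 := by
  intro h
  apply h4
  have hsq : q ^ 2 = -1 := by
    field_simp at h
    linear_combination h
  linear_combination (q ^ 2 - 1) * hsq

namespace ScalarSystem

variable {k : Type*} [Field k] {q : k}

lemma γ_ne_zero (Γ : ScalarSystem n k q) {S T : Finset (Fin n)} (h : Disjoint S T)
    (lam : Fin n → ℤ) : Γ.γ S T lam ≠ 0 :=
  left_ne_zero_of_mul_eq_one (Γ.rel1 S T lam h)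

section Ratio

variable (Γ Γ' : ScalarSystem n k q)

def ratio (S T : Finset (Fin n)) (lam : Fin n → ℤ) : k := Γ.γ S T lam / Γ'.γ S T lam

lemma ratio_eq_one_iff {S T : Finset (Fin n)} (h : Disjoint S T) (lam : Fin n → ℤ) :
    ratio Γ Γ' S T lam = 1 ↔ Γ.γ S T lam = Γ'.γ S T lam :=
  div_eq_one_iff_eq (Γ'.γ_ne_zero h lam)

lemma ratio_rel1 {S T : Finset (Fin n)} (h : Disjoint S T) (lam : Fin n → ℤ) :
    ratio Γ Γ' S T lam * ratio Γ Γ' T S (lam - eVec n S) = 1 := by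
  rw [ratio, ratio, div_mul_div_comm, Γ.rel1 S T lam h, Γ'.rel1 S T lam h, div_one]

lemma ratio_rel3 (S : Finset (Fin n)) {i j : Fin n} (hij : i ≠ j) (hi : i ∉ S) (hj : j ∉ S)
    (lam : Fin n → ℤ) :
    ratio Γ Γ' S {i} lam * ratio Γ Γ' {i} (insert j S) (lam - eVec n (insert j S))
      = ratio Γ Γ' (insert i S) {j} (lam - eVec n {j})
        * ratio Γ Γ' {j} S (lam - eVec n (insert j S)) := by
  simp only [ratio, div_mul_div_comm, Γ.rel3 S i j lam hij hi hj, Γ'.rel3 S i j lam hij hi hj]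

lemma ratio_rel4 {S T U : Finset (Fin n)} (hST : Disjoint S T) (hSU : Disjoint S U)
    (hTU : Disjoint T U) (lam : Fin n → ℤ) :
    ratio Γ Γ' S T (lam + eVec n U) * ratio Γ Γ' (S ∪ T) U lam
      = ratio Γ Γ' S (T ∪ U) lam * ratio Γ Γ' T U lam := by
  simp only [ratio, div_mul_div_comm, Γ.rel4 S T U lam hST hSU hTU, Γ'.rel4 S T U lam hST hSU hTU]

def AgreeBelow (N : ℕ) : Prop :=
  ∀ S T : Finset (Fin n), Disjoint S T → S.card + T.card < N →
    ∀ lam, Γ.γ S T lam = Γ'.γ S T lam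

variable {Γ Γ'}

lemma AgreeBelow.ratio_eq_one {N : ℕ} (h : AgreeBelow Γ Γ' N) {S T : Finset (Fin n)}
    (hST : Disjoint S T) (hcard : S.card + T.card < N) (lam : Fin n → ℤ) :
    ratio Γ Γ' S T lam = 1 :=
  (ratio_eq_one_iff Γ Γ' hST lam).mpr (h S T hST hcard lam)

lemma agreeBelow_three
    (hsingle : ∀ (i j : Fin n) (lam : Fin n → ℤ), i ≠ j → Γ.γ {i} {j} lam = Γ'.γ {i} {j} lam) :
    AgreeBelow Γ Γ' 3 := by
  intro S T hST hcard lam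
  obtain rfl | hS := S.eq_empty_or_nonempty
  · rw [Γ.empty_left, Γ'.empty_left]
  obtain rfl | hT := T.eq_empty_or_nonempty
  · rw [Γ.empty_right, Γ'.empty_right]
  have := hS.card_pos
  have := hT.card_pos
  obtain ⟨i, rfl⟩ := card_eq_one.mp (by omega : S.card = 1)
  obtain ⟨j, rfl⟩ := card_eq_one.mp (by omega : T.card = 1)
  exact hsingle i j lam (disjoint_singleton.mp hST)


variable {S : Finset (Fin n)} {i j : Fin n}

lemma ratio_insert_mul_ratio_insert_add_eVec (h : AgreeBelow Γ Γ' (S.card + 2))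
    (hS : S.Nonempty) (hi : i ∉ S) (hj : j ∉ S) (hij : i ≠ j) (lam : Fin n → ℤ) :
    ratio Γ Γ' (insert i S) {j} lam * ratio Γ Γ' (insert i S) {j} (lam + eVec n S) = 1 := by
  have hiS : Disjoint {i} S := disjoint_singleton_left.mpr hi
  have hjS : Disjoint {j} S := disjoint_singleton_left.mpr hj
  have hij' : Disjoint ({i} : Finset (Fin n)) {j} := disjoint_singleton.mpr hij
  have hS_ij : Disjoint S ({i} ∪ {j}) := disjoint_union_right.mpr ⟨hiS.symm, hjS.symm⟩
  have hS2 := hS.card_pos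
  have hA := ratio_rel4 Γ Γ' hiS hij' hjS.symm lam
  have hB := ratio_rel4 Γ Γ' hij' hiS hjS lam
  have hC := ratio_rel1 Γ Γ' hS_ij (lam + eVec n S)
  have hD := ratio_rel4 Γ Γ' hiS.symm hjS.symm hij' (lam + eVec n S)
  rw [h.ratio_eq_one hiS (by simp only [card_singleton]; omega),
    h.ratio_eq_one hjS.symm (by simp only [card_singleton]; omega),
    one_mul, mul_one, ← insert_eq, union_comm] at hA
  rw [h.ratio_eq_one hij' (by simp only [card_singleton]; omega),
    h.ratio_eq_one hjS (by simp only [card_singleton]; omega), one_mul, mul_one] at hB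
  rw [h.ratio_eq_one hiS.symm (by simp only [card_singleton]; omega),
    h.ratio_eq_one hij' (by simp only [card_singleton]; omega),
    one_mul, mul_one, union_comm, ← insert_eq] at hD
  rw [add_sub_cancel_right] at hC
  rw [hA, hD, ← hB, mul_comm, hC]

lemma ratio_insert_sub_mul_ratio_insert (h : AgreeBelow Γ Γ' (S.card + 2))
    (hi : i ∉ S) (hj : j ∉ S) (hij : i ≠ j) (lam : Fin n → ℤ) :
    ratio Γ Γ' (insert i S) {j} (lam - eVec n {j}) * ratio Γ Γ' (insert j S) {i} lam = 1 := by
  have h3 := ratio_rel3 Γ Γ' S hij hi hj lam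
  rw [h.ratio_eq_one (disjoint_singleton_right.mpr hi) (by simp only [card_singleton]; omega),
    h.ratio_eq_one (disjoint_singleton_left.mpr hj) (by simp only [card_singleton]; omega),
    one_mul, mul_one] at h3
  rw [← h3, mul_comm]
  exact ratio_rel1 Γ Γ' (by simp [hi, hij]) lam

lemma ratio_insert_mul_ratio_insert_add_eVec_erase (h : AgreeBelow Γ Γ' (S.card + 2))
    (hS : S.Nonempty) (hi : i ∉ S) (hj : j ∉ S) (hij : i ≠ j) (b : Fin n)
    (hb : b ∈ insert i S) (lam : Fin n → ℤ) :
    ratio Γ Γ' (insert i S) {j} lam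
      * ratio Γ Γ' (insert i S) {j} (lam + eVec n ((insert i S).erase b)) = 1 := by
  have hcard : ((insert i S).erase b).card = S.card := by
    rw [card_erase_of_mem hb, card_insert_of_notMem hi, Nat.add_sub_cancel]
  have hbj : b ≠ j := by
    rintro rfl
    exact (mem_insert.mp hb).elim (fun h' => hij h'.symm) hj
  have hj' : j ∉ (insert i S).erase b := fun h' =>
    (mem_insert.mp (mem_of_mem_erase h')).elim (fun h'' => hij h''.symm) hj
  have key := ratio_insert_mul_ratio_insert_add_eVec (hcard ▸ h)
    (card_pos.mp (hcard ▸ hS.card_pos)) (notMem_erase b _) hj' hbj lam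
  rwa [insert_erase hb] at key

lemma ratio_insert_add_eVec_singleton (h : AgreeBelow Γ Γ' (S.card + 2))
    (hS : S.Nonempty) (hi : i ∉ S) (hj : j ∉ S) (hij : i ≠ j) {x : Fin n}
    (hx : x ∈ insert i S) (μ : Fin n → ℤ) :
    ratio Γ Γ' (insert i S) {j} (μ + eVec n {x})
      = ratio Γ Γ' (insert i S) {j} (μ + eVec n {j}) := by
  have hσ : ∀ ν, ratio Γ Γ' (insert j S) {i} ν
      = (ratio Γ Γ' (insert i S) {j} (ν - eVec n {j}))⁻¹ :=
    fun ν => eq_inv_of_mul_eq_one_right (ratio_insert_sub_mul_ratio_insert h hi hj hij ν)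
  have hS_eq : ∀ y ∈ S, ratio Γ Γ' (insert i S) {j} (μ + eVec n {y})
      = ratio Γ Γ' (insert i S) {j} (μ + eVec n {j}) := by
    intro y hy
    have key := apply_add_eVec_singleton_eq
      (ratio_insert_mul_ratio_insert_add_eVec_erase h hS hj hi hij.symm)
      (mem_insert_of_mem hy) (mem_insert_self j S) (μ + eVec n {j})
    rw [hσ, hσ, inv_inj] at key
    convert key using 2 <;> abel
  obtain rfl | hx := mem_insert.mp hx
  · obtain ⟨a, ha⟩ := hS
    rw [apply_add_eVec_singleton_eq
      (ratio_insert_mul_ratio_insert_add_eVec_erase h ⟨a, ha⟩ hi hj hij)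
      (mem_insert_self x S) (mem_insert_of_mem ha)]
    exact hS_eq a ha
  · exact hS_eq x hx

lemma ratio_insert_periodic (h : AgreeBelow Γ Γ' (S.card + 2))
    (hS : S.Nonempty) (hi : i ∉ S) (hj : j ∉ S) (hij : i ≠ j) :
    Function.Periodic (ratio Γ Γ' (insert i S) {j}) (2 • eVec n {j}) := by
  intro μ
  have h1 := ratio_insert_sub_mul_ratio_insert h hi hj hij (μ + eVec n {j})
  have h2 := ratio_insert_sub_mul_ratio_insert h hj hi hij.symm (μ + eVec n {j} + eVec n {i})
  rw [add_sub_cancel_right] at h1 h2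
  calc ratio Γ Γ' (insert i S) {j} (μ + 2 • eVec n {j})
      = ratio Γ Γ' (insert i S) {j} (μ + eVec n {j} + eVec n {j}) := by rw [two_nsmul, add_assoc]
    _ = ratio Γ Γ' (insert i S) {j} (μ + eVec n {j} + eVec n {i}) :=
      (ratio_insert_add_eVec_singleton h hS hi hj hij (mem_insert_self i S) _).symm
    _ = ratio Γ Γ' (insert i S) {j} μ :=
      (eq_inv_of_mul_eq_one_right h2).trans (eq_inv_of_mul_eq_one_left h1).symm

lemma ratio_insert_mul_ratio_insert_add_card_nsmul (h : AgreeBelow Γ Γ' (S.card + 2))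
    (hS : S.Nonempty) (hi : i ∉ S) (hj : j ∉ S) (hij : i ≠ j) (μ : Fin n → ℤ) :
    ratio Γ Γ' (insert i S) {j} μ
      * ratio Γ Γ' (insert i S) {j} (μ + S.card • eVec n {j}) = 1 := by
  rw [← apply_add_eVec_eq_of_forall_mem
    (fun x hx => ratio_insert_add_eVec_singleton h hS hi hj hij (mem_insert_of_mem hx))]
  exact ratio_insert_mul_ratio_insert_add_eVec h hS hi hj hij μ

lemma ratio_insert_mul_add_ratio_insert_mul (h : AgreeBelow Γ Γ' (S.card + 2))
    (hi : i ∉ S) (hj : j ∉ S) (hij : i ≠ j) (lam : Fin n → ℤ) :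
    ratio Γ Γ' (insert i S) {j} lam * (Γ'.γ (insert i S) {j} lam * Γ'.γ {j} S (lam - eVec n S))
      + ratio Γ Γ' (insert j S) {i} lam * (Γ'.γ (insert j S) {i} lam * Γ'.γ {i} S (lam - eVec n S))
      = q + q⁻¹ := by
  have ht : Γ.γ (insert i S) {j} lam
      = ratio Γ Γ' (insert i S) {j} lam * Γ'.γ (insert i S) {j} lam :=
    (div_mul_cancel₀ _ (Γ'.γ_ne_zero (by simp [hj, hij.symm]) lam)).symm
  have hσ : Γ.γ (insert j S) {i} lam
      = ratio Γ Γ' (insert j S) {i} lam * Γ'.γ (insert j S) {i} lam :=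
    (div_mul_cancel₀ _ (Γ'.γ_ne_zero (by simp [hi, hij]) lam)).symm
  have hΓ := Γ.rel2 S i j lam hij hi hj
  rw [ht, hσ, h {j} S (disjoint_singleton_left.mpr hj) (by simp only [card_singleton]; omega),
    h {i} S (disjoint_singleton_left.mpr hi) (by simp only [card_singleton]; omega)] at hΓ
  linear_combination hΓ

/-- Relation (ii) reads `t X + σ Y = X + Y` for the ratios `t`, `σ` of `γ(S ∪ {i}, {j})` and
`γ(S ∪ {j}, {i})`; the parity of `|S|` forces either `σ = t` or `t, σ ∈ {±1}`, and both leave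
only `t = 1` since `X` and `X + Y = [2]_q` are nonzero. -/
lemma ratio_insert_eq_one [NeZero (2 : k)] (hq : q + q⁻¹ ≠ 0) (h : AgreeBelow Γ Γ' (S.card + 2))
    (hS : S.Nonempty) (hi : i ∉ S) (hj : j ∉ S) (hij : i ≠ j) (lam : Fin n → ℤ) :
    ratio Γ Γ' (insert i S) {j} lam = 1 := by
  set t := ratio Γ Γ' (insert i S) {j}
  set σ := ratio Γ Γ' (insert j S) {i}
  set X := Γ'.γ (insert i S) {j} lam * Γ'.γ {j} S (lam - eVec n S)
  set Y := Γ'.γ (insert j S) {i} lam * Γ'.γ {i} S (lam - eVec n S)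
  have hX : X ≠ 0 := mul_ne_zero (Γ'.γ_ne_zero (by simp [hj, hij.symm]) lam)
    (Γ'.γ_ne_zero (disjoint_singleton_left.mpr hj) _)
  have hXY : X + Y = q + q⁻¹ := Γ'.rel2 S i j lam hij hi hj
  have hrel2 : t lam * X + σ lam * Y = X + Y :=
    (ratio_insert_mul_add_ratio_insert_mul h hi hj hij lam).trans hXY.symm
  replace hXY : X + Y ≠ 0 := hXY ▸ hq
  have hσ : σ lam * t (lam - eVec n {j}) = 1 := by
    rw [mul_comm]
    exact ratio_insert_sub_mul_ratio_insert h hi hj hij lam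
  have hper := ratio_insert_periodic h hS hi hj hij
  have hcard := ratio_insert_mul_ratio_insert_add_card_nsmul h hS hi hj hij
  rcases Nat.even_or_odd S.card with ⟨c, hc⟩ | ⟨c, hc⟩
  · have hsq : ∀ μ, t μ * t μ = 1 := fun μ => by
      simpa only [hc, ← mul_two, ← smul_smul, hper.nsmul c μ] using hcard μ
    have hσt : σ lam = t (lam - eVec n {j}) :=
      (eq_inv_of_mul_eq_one_left hσ).trans (eq_inv_of_mul_eq_one_right (hsq _)).symm
    rcases mul_self_eq_one_iff.mp (hsq lam) with ht | ht
    · exact ht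
    rcases mul_self_eq_one_iff.mp (hsq (lam - eVec n {j})) with hs | hs <;>
      rw [ht, hσt, hs] at hrel2
    · have h2X : (2 : k) * X = 0 := by linear_combination -hrel2
      exact absurd ((mul_eq_zero.mp h2X).resolve_left two_ne_zero) hX
    · have h2XY : (2 : k) * (X + Y) = 0 := by linear_combination -hrel2
      exact absurd ((mul_eq_zero.mp h2XY).resolve_left two_ne_zero) hXY
  · have hshift : t (lam - eVec n {j}) * t lam = 1 := by
      have := hcard (lam - eVec n {j})
      rwa [hc, succ_nsmul', ← add_assoc, sub_add_cancel, mul_comm 2 c, ← smul_smul,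
        hper.nsmul c] at this
    have hσt : σ lam = t lam :=
      (eq_inv_of_mul_eq_one_left hσ).trans (eq_inv_of_mul_eq_one_right hshift).symm
    rw [hσt, ← mul_add] at hrel2
    exact (mul_eq_right₀ hXY).mp hrel2

lemma γ_singleton_right_eq [NeZero (2 : k)] (hq : q + q⁻¹ ≠ 0) {A : Finset (Fin n)} {j : Fin n}
    (hA : 2 ≤ A.card) (h : AgreeBelow Γ Γ' (A.card + 1)) (hj : j ∉ A) (lam : Fin n → ℤ) :
    Γ.γ A {j} lam = Γ'.γ A {j} lam := by
  obtain ⟨i, hi⟩ := card_pos.mp (by omega : 0 < A.card)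
  have hcard := card_erase_add_one hi
  rw [← ratio_eq_one_iff Γ Γ' (disjoint_singleton_right.mpr hj), ← insert_erase hi]
  exact ratio_insert_eq_one hq (by rwa [← hcard] at h) (card_pos.mp (by omega))
    (notMem_erase i A) (fun h' => hj (mem_of_mem_erase h')) (fun h' => hj (h' ▸ hi)) lam

lemma agreeBelow_succ [NeZero (2 : k)] (hq : q + q⁻¹ ≠ 0) {N : ℕ} (hN : 3 ≤ N)
    (h : AgreeBelow Γ Γ' N) : AgreeBelow Γ Γ' (N + 1) := by
  intro S T hST hcard lam
  rcases Nat.lt_or_ge (S.card + T.card) N with hlt | hge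
  · exact h S T hST hlt lam
  obtain rfl | hS := S.eq_empty_or_nonempty
  · rw [Γ.empty_left, Γ'.empty_left]
  obtain rfl | ⟨u, hu⟩ := T.eq_empty_or_nonempty
  · rw [Γ.empty_right, Γ'.empty_right]
  have huS : u ∉ S := disjoint_right.mp hST hu
  have hT := card_erase_add_one hu
  have hST' : Disjoint S (T.erase u) := hST.mono_right (erase_subset u T)
  have hSu : Disjoint S {u} := disjoint_singleton_right.mpr huS
  have hT'u : Disjoint (T.erase u) {u} := disjoint_singleton_right.mpr (notMem_erase u T)
  have hS_T' := card_union_of_disjoint hST'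
  have hS1 := hS.card_pos
  have hSTu : ratio Γ Γ' (S ∪ T.erase u) {u} lam = 1 :=
    (ratio_eq_one_iff Γ Γ' (disjoint_union_left.mpr ⟨hSu, hT'u⟩) lam).mpr
      (γ_singleton_right_eq hq (by omega) (by convert h using 2; omega) (by simp [huS]) lam)
  have key := ratio_rel4 Γ Γ' hST' hSu hT'u lam
  rw [h.ratio_eq_one hST' (by omega), h.ratio_eq_one hT'u (by rw [card_singleton]; omega), hSTu,
    union_comm (T.erase u), ← insert_eq, insert_erase hu, one_mul, mul_one, eq_comm] at key
  exact (ratio_eq_one_iff Γ Γ' hST lam).mp key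

end Ratio

end ScalarSystem

theorem scalarSystem_ext_of_singles_general {n : ℕ}
    {k : Type*} [Field k] [CharZero k]
    (q : k) (hq : q ≠ 0) (hroot : ∀ m : ℤ, m ≠ 0 → q ^ m ≠ 1)
    (Γ Γ' : ScalarSystem n k q)
    (hsingle : ∀ (i j : Fin n) (lam : Fin n → ℤ), i ≠ j →
      Γ.γ {i} {j} lam = Γ'.γ {i} {j} lam) :
    ∀ (S T : Finset (Fin n)) (lam : Fin n → ℤ), Disjoint S T →
      Γ.γ S T lam = Γ'.γ S T lam := by
  have hq2 : q + q⁻¹ ≠ 0 :=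
    add_inv_ne_zero_of_pow_four_ne_one hq (by simpa using hroot 4 (by norm_num))
  have hagree : ∀ N, 3 ≤ N → ScalarSystem.AgreeBelow Γ Γ' N :=
    Nat.le_induction (ScalarSystem.agreeBelow_three hsingle)
      (fun _ hN h => ScalarSystem.agreeBelow_succ hq2 hN h)
  intro S T lam hST
  exact hagree (S.card + T.card + 3) (by omega) S T hST (by omega) lam

/-- Corollary 5.9: a scalar system of `SL_n`-type is determined by its
values on pairs of distinct singletons. -/
theorem scalarSystem_ext_of_singles {n : ℕ} (hn : 1 ≤ n)
    {k : Type*} [Field k] [CharZero k]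
    (q : k) (hq : q ≠ 0) (hroot : ∀ m : ℤ, m ≠ 0 → q ^ m ≠ 1)
    (Γ Γ' : ScalarSystem n k q)
    (hsingle : ∀ (i j : Fin n) (lam : Fin n → ℤ), i ≠ j →
      Γ.γ {i} {j} lam = Γ'.γ {i} {j} lam) :
    ∀ (S T : Finset (Fin n)) (lam : Fin n → ℤ), Disjoint S T →
      Γ.γ S T lam = Γ'.γ S T lam :=
  scalarSystem_ext_of_singles_general q hq hroot Γ Γ' hsingle
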